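/- Let φ : Ω → L(E) be strongly continuous and unbounded (sup_{x∈Ω}‖φ(x)‖ = ∞), with Ω locally compact Hausdorff such that for each x ∈ Ω there is f ∈ C_0(Ω) with ‖f‖ = 1 = f(x). Then the multiplication semigroup (T_φ(t))_{t≥0} on C_0(Ω, E) (assumed to consist of bounded operators) is not uniformly continuous: there exist δ > 0 and a sequence t_n ↓ 0 with ‖I − T_φ(t_n)‖ ≥ δ for all n. -/

import Mathlib

/-!
Rescale so that `‖tₙ φ(xₙ)‖ = 1` with `tₙ = ‖φ(xₙ)‖⁻¹ → 0`. In any Banach algebra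
`‖1 - exp a‖ ≥ 2‖a‖ + 1 - e^‖a‖`, which is `3 - e > 0` when `‖a‖ = 1`. Testing
`I - T(tₙ)` on the sections `f z` with `f` peaking at `xₙ` shows that its norm dominates
`‖1 - exp (tₙ φ(xₙ))‖`.
-/

open ZeroAtInfty NormedSpace Filter Topology

section ExpBound

variable {A : Type*} [NormedRing A] [NormedAlgebra ℝ A] [CompleteSpace A]

open Nat in
lemma hasSum_exp_sub_one_sub (a : A) :
    HasSum (fun n ↦ ((n + 2)! : ℝ)⁻¹ • a ^ (n + 2)) (exp a - 1 - a) := by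
  have := (hasSum_nat_add_iff' 2).mpr (exp_series_hasSum_exp' (𝕂 := ℝ) a)
  simpa [Finset.sum_range_succ, sub_sub] using this

lemma norm_exp_sub_one_sub_le (a : A) : ‖exp a - 1 - a‖ ≤ Real.exp ‖a‖ - 1 - ‖a‖ := by
  have hreal := hasSum_exp_sub_one_sub ‖a‖
  rw [← Real.exp_eq_exp_ℝ] at hreal
  refine (hasSum_exp_sub_one_sub a).norm_le_of_bounded hreal fun n ↦ ?_
  rw [norm_smul, norm_inv, RCLike.norm_natCast, smul_eq_mul]
  gcongr
  exact norm_pow_le' a (by omega)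

lemma two_mul_norm_add_one_sub_exp_le (a : A) :
    2 * ‖a‖ + 1 - Real.exp ‖a‖ ≤ ‖1 - exp a‖ := by
  have := norm_sub_le (exp a - 1) (exp a - 1 - a)
  rw [sub_sub_cancel, norm_sub_rev] at this
  linarith [norm_exp_sub_one_sub_le a]

lemma three_sub_exp_one_le_norm_one_sub_exp {a : A} (ha : ‖a‖ = 1) :
    3 - Real.exp 1 ≤ ‖1 - exp a‖ := by
  have := two_mul_norm_add_one_sub_exp_le a
  rw [ha] at this
  linarith

end ExpBound

namespace ZeroAtInftyContinuousMap

variable {Ω E F : Type*} [TopologicalSpace Ω] [NormedAddCommGroup E] [NormedSpace ℝ E]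
  [NormedAddCommGroup F] [NormedSpace ℝ F]

omit [NormedSpace ℝ E] in
lemma norm_apply_le_norm (s : C₀(Ω, E)) (x : Ω) : ‖s x‖ ≤ ‖s‖ :=
  norm_toBCF_eq_norm (f := s) ▸ s.toBCF.norm_coe_le_norm x

def smulConst (f : C₀(Ω, ℝ)) (z : E) : C₀(Ω, E) where
  toFun x := f x • z
  continuous_toFun := (map_continuous f).smul continuous_const
  zero_at_infty' := by simpa using (zero_at_infty f).smul_const z

@[simp]
lemma smulConst_apply (f : C₀(Ω, ℝ)) (z : E) (x : Ω) : smulConst f z x = f x • z := rfl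

lemma norm_smulConst_le (f : C₀(Ω, ℝ)) (z : E) : ‖smulConst f z‖ ≤ ‖f‖ * ‖z‖ := by
  rw [← norm_toBCF_eq_norm]
  refine (BoundedContinuousFunction.norm_le (by positivity)).2 fun x ↦ ?_
  simpa [norm_smul] using mul_le_mul_of_nonneg_right (norm_apply_le_norm f x) (norm_nonneg z)

lemma norm_le_opNorm_of_apply_eq {L : C₀(Ω, E) →L[ℝ] C₀(Ω, F)} {A : E →L[ℝ] F} {x : Ω}
    {f : C₀(Ω, ℝ)} (hf : ‖f‖ = 1) (hfx : f x = 1) (hL : ∀ s, L s x = A (s x)) :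
    ‖A‖ ≤ ‖L‖ := by
  refine A.opNorm_le_bound (norm_nonneg L) fun z ↦ ?_
  calc ‖A z‖ = ‖L (smulConst f z) x‖ := by simp [hL, hfx]
    _ ≤ ‖L (smulConst f z)‖ := norm_apply_le_norm _ x
    _ ≤ ‖L‖ * ‖smulConst f z‖ := L.le_opNorm _
    _ ≤ ‖L‖ * ‖z‖ := by
      gcongr
      simpa [hf] using norm_smulConst_le f z

end ZeroAtInftyContinuousMap

open ZeroAtInftyContinuousMap in
theorem multiplication_semigroup_not_uniformly_continuous_general (Ω E : Type*)
    [TopologicalSpace Ω] [NormedAddCommGroup E]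
    [NormedSpace ℝ E] [CompleteSpace E]
    (φ : Ω → (E →L[ℝ] E))
    (hunbdd : ∀ C : ℝ, ∃ x, C ≤ ‖φ x‖)
    (hurysohn : ∀ x : Ω, ∃ f : C₀(Ω, ℝ), ‖f‖ = 1 ∧ f x = 1)
    (T : ℝ → C₀(Ω, E) →L[ℝ] C₀(Ω, E))
    (hT : ∀ t : ℝ, 0 ≤ t → ∀ s : C₀(Ω, E), ∀ x, T t s x = exp (t • φ x) (s x)) :
    ∃ δ > (0 : ℝ), ∃ t : ℕ → ℝ, (∀ n, 0 < t n) ∧ Tendsto t atTop (𝓝 0) ∧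
      ∀ n, δ ≤ ‖(1 : C₀(Ω, E) →L[ℝ] C₀(Ω, E)) - T (t n)‖ := by
  choose x hx using fun n : ℕ ↦ hunbdd (n + 1)
  have hpos n : 0 < ‖φ (x n)‖ := by linarith [hx n, n.cast_nonneg (α := ℝ)]
  refine ⟨3 - Real.exp 1, by linarith [Real.exp_one_lt_d9], fun n ↦ ‖φ (x n)‖⁻¹,
    fun n ↦ inv_pos.2 (hpos n), ?_, fun n ↦ ?_⟩
  · exact (tendsto_atTop_mono (fun n ↦ by linarith [hx n]) tendsto_natCast_atTop_atTop
      |>.inv_tendsto_atTop)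
  · have hunit : ‖‖φ (x n)‖⁻¹ • φ (x n)‖ = 1 := by
      rw [norm_smul, norm_inv, norm_norm, inv_mul_cancel₀ (hpos n).ne']
    obtain ⟨f, hf, hfx⟩ := hurysohn (x n)
    refine (three_sub_exp_one_le_norm_one_sub_exp hunit).trans
      (norm_le_opNorm_of_apply_eq hf hfx fun s ↦ ?_)
    simp [hT _ (inv_pos.2 (hpos n)).le]

/-- If `φ : Ω → L(E)` is strongly continuous and unbounded, then the multiplication
semigroup `T_φ(t)s = e^{tφ(·)}s(·)` on `C₀(Ω, E)` is not uniformly continuous: there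
are `δ > 0` and a sequence `tₙ ↓ 0` with `‖I − T_φ(tₙ)‖ ≥ δ` for all `n`. -/
theorem multiplication_semigroup_not_uniformly_continuous (Ω E : Type*)
    [TopologicalSpace Ω] [LocallyCompactSpace Ω] [T2Space Ω] [NormedAddCommGroup E]
    [NormedSpace ℝ E] [CompleteSpace E] [Nontrivial E]
    (φ : Ω → (E →L[ℝ] E)) (hφ : ∀ z : E, Continuous fun x => φ x z)
    (hunbdd : ∀ C : ℝ, ∃ x, C ≤ ‖φ x‖)
    (hurysohn : ∀ x : Ω, ∃ f : C₀(Ω, ℝ), ‖f‖ = 1 ∧ f x = 1)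
    (T : ℝ → C₀(Ω, E) →L[ℝ] C₀(Ω, E))
    (hT : ∀ t : ℝ, 0 ≤ t → ∀ s : C₀(Ω, E), ∀ x, T t s x = exp (t • φ x) (s x)) :
    ∃ δ > (0 : ℝ), ∃ t : ℕ → ℝ, (∀ n, 0 < t n) ∧ Tendsto t atTop (𝓝 0) ∧
      ∀ n, δ ≤ ‖(1 : C₀(Ω, E) →L[ℝ] C₀(Ω, E)) - T (t n)‖ :=
  multiplication_semigroup_not_uniformly_continuous_general Ω E φ hunbdd hurysohn T hT
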